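/- Let ω be a locally finite positive Borel measure on ℝⁿ and 𝒟 a dyadic grid. Suppose {g_J}_{J ∈ 𝒟} are functions with g_J supported in J, ∫ g_J dω = 0, and for each J' ⊊ J with ℓ(J') = 2^{-m} ℓ(J) one has |∫ g_J g_{J'} dω| ≤ 2^{-m} √(|J'|_ω/|J|_ω) ‖g_{J'}‖_{L²(ω)} ‖g_J‖_{L²(ω)}, while for incomparable J, J' the supports are disjoint. Then ‖Σ_J g_J‖_{L²(ω)}² ≤ C Σ_J ‖g_J‖_{L²(ω)}², with C an absolute constant (given a fixed dimension n). -/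

import Mathlib

open MeasureTheory ENNReal

noncomputable section

/-- The standard dyadic cube of scale `2^k` at position `m`. -/
def DyadicCube (n : ℕ) (k : ℤ) (m : Fin n → ℤ) : Set (Fin n → ℝ) :=
  {x | ∀ i, (m i : ℝ) * 2 ^ k ≤ x i ∧ x i < ((m i : ℝ) + 1) * 2 ^ k}

/-!
Expanding the square, `∫ (∑ g_J)²` is the sum of the diagonal terms `‖g_J‖²` plus twice the sum
over pairs `J' ⊊ J`: distinct cubes that are not nested are disjoint, so the other products vanish.
By AM-GM a nested term is at most `½ 2^{-m} (|J'|/|J| ‖g_J‖² + ‖g_{J'}‖²)`, and a Schur test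
finishes: the cubes of one generation inside `J` have total mass at most `|J|`, and `J'` has at most
one ancestor per generation, so both weight sums are geometric series bounded by `1`. Hence `C = 3`.
-/

theorem sum_two_zpow_le_one {ι : Type*} {F : Finset ι} {s : ι → ℤ} (hs : Set.InjOn s F)
    (hneg : ∀ i ∈ F, s i < 0) : ∑ i ∈ F, (2 : ℝ) ^ s i ≤ 1 := by
  set t : ι → ℕ := fun i => (-s i - 1).toNat
  have ht : Set.InjOn t F := fun i hi j hj h => by
    have := hneg i hi
    have := hneg j hj
    exact hs hi hj (by simp only [t] at h; omega)
  have hpow : ∀ i ∈ F, (2 : ℝ) ^ s i = (1 / 2) ^ t i / 2 := by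
    intro i hi
    have : s i = -(t i : ℤ) - 1 := by simp only [t]; have := hneg i hi; omega
    rw [this, zpow_sub₀ two_ne_zero, zpow_neg, zpow_natCast, one_div, inv_pow, zpow_one]
  calc ∑ i ∈ F, (2 : ℝ) ^ s i = (∑ j ∈ F.image t, (1 / 2 : ℝ) ^ j) / 2 := by
        rw [Finset.sum_image ht, Finset.sum_div]; exact Finset.sum_congr rfl hpow
    _ ≤ (∑' j : ℕ, (1 / 2 : ℝ) ^ j) / 2 := by
        gcongr
        exact Summable.sum_le_tsum _ (fun _ _ => by positivity) summable_geometric_two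
    _ = 1 := by rw [tsum_geometric_two]; norm_num

theorem two_mul_le_of_abs_le_mul_sqrt {x r t a b : ℝ} (hr : 0 ≤ r) (ht : 0 ≤ t) (ha : 0 ≤ a)
    (hb : 0 ≤ b) (hx : |x| ≤ r * √t * √b * √a) : 2 * x ≤ r * t * a + r * b := by
  have amgm := two_mul_le_add_sq (√t * √a) √b
  rw [mul_pow, Real.sq_sqrt ht, Real.sq_sqrt ha, Real.sq_sqrt hb] at amgm
  calc 2 * x ≤ r * (2 * (√t * √a) * √b) := by nlinarith [le_abs_self x]
    _ ≤ r * (t * a + b) := mul_le_mul_of_nonneg_left amgm hr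
    _ = r * t * a + r * b := by ring

theorem Finset.sum_sum_eq_sum_diag_add_two_mul_sum_rel {ι : Type*} [DecidableEq ι]
    (S : Finset ι) (G : ι → ι → ℝ) (R : ι → ι → Prop) [DecidableRel R]
    (hG : ∀ i j, G i j = G j i) (hR : ∀ i j, R i j → ¬R j i)
    (hzero : ∀ i ∈ S, ∀ j ∈ S, i ≠ j → ¬R i j → ¬R j i → G i j = 0) :
    ∑ i ∈ S, ∑ j ∈ S, G i j = ∑ i ∈ S, G i i + 2 * ∑ i ∈ S, ∑ j ∈ S with R j i, G i j := by
  have split : ∀ i ∈ S, ∀ j ∈ S, G i j =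
      (if i = j then G i j else 0) + (if R j i then G i j else 0) +
        (if R i j then G i j else 0) := by
    intro i hi j hj
    by_cases hij : i = j
    · subst hij; simp [show ¬R i i from fun h => hR i i h h]
    by_cases hji : R j i
    · simp [hij, hji, hR j i hji]
    by_cases hij' : R i j
    · simp [hij, hji, hij']
    · simp [hij, hji, hij', hzero i hi j hj hij hij' hji]
  have upper : ∑ i ∈ S, ∑ j ∈ S, (if R i j then G i j else 0) =
      ∑ i ∈ S, ∑ j ∈ S, (if R j i then G i j else 0) := by
    rw [Finset.sum_comm]
    simp_rw [hG]
  rw [Finset.sum_congr rfl fun i hi => Finset.sum_congr rfl (split i hi)]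
  simp only [Finset.sum_add_distrib, Finset.sum_ite_eq, Finset.sum_ite_mem, Finset.inter_self,
    upper, Finset.sum_filter]
  ring

theorem Finset.sum_sum_filter_mul_add_mul_le {ι : Type*} (S : Finset ι) (R : ι → ι → Prop)
    [DecidableRel R] (u v : ι → ι → ℝ) (a : ι → ℝ) (ha : ∀ i ∈ S, 0 ≤ a i)
    (hu : ∀ i ∈ S, ∑ j ∈ S with R j i, u i j ≤ 1) (hv : ∀ j ∈ S, ∑ i ∈ S with R j i, v i j ≤ 1) :
    ∑ i ∈ S, ∑ j ∈ S with R j i, (u i j * a i + v i j * a j) ≤ 2 * ∑ i ∈ S, a i := by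
  have swap : ∑ i ∈ S, ∑ j ∈ S with R j i, v i j * a j =
      ∑ j ∈ S, (∑ i ∈ S with R j i, v i j) * a j := by
    simp_rw [Finset.sum_mul, Finset.sum_filter]
    exact Finset.sum_comm
  rw [two_mul]
  simp_rw [Finset.sum_add_distrib, swap, ← Finset.sum_mul]
  gcongr with i hi j hj
  · exact mul_le_of_le_one_left (ha i hi) (hu i hi)
  · exact mul_le_of_le_one_left (ha j hj) (hv j hj)

theorem integral_sq_sum_eq_sum_sum_integral_mul {α ι : Type*} [MeasurableSpace α]
    {μ : Measure α} (S : Finset ι) {f : ι → α → ℝ} (hf : ∀ i ∈ S, MemLp (f i) 2 μ) :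
    ∫ x, (∑ i ∈ S, f i x) ^ 2 ∂μ = ∑ i ∈ S, ∑ j ∈ S, ∫ x, f i x * f j x ∂μ := by
  have hint : ∀ i ∈ S, ∀ j ∈ S, Integrable (fun x => f i x * f j x) μ :=
    fun i hi j hj => (hf i hi).integrable_mul (hf j hj)
  simp_rw [sq, Finset.sum_mul_sum]
  rw [integral_finsetSum S fun i hi => integrable_finsetSum S (hint i hi)]
  exact Finset.sum_congr rfl fun i hi => integral_finsetSum S (hint i hi)

theorem integral_mul_eq_zero_of_disjoint {α : Type*} [MeasurableSpace α] {μ : Measure α}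
    {f g : α → ℝ} {s t : Set α} (hst : Disjoint s t) (hf : ∀ x ∉ s, f x = 0)
    (hg : ∀ x ∉ t, g x = 0) : ∫ x, f x * g x ∂μ = 0 := by
  have : (fun x => f x * g x) = 0 := funext fun x => by
    by_cases hx : x ∈ s
    · rw [hg x (Set.disjoint_left.1 hst hx), mul_zero, Pi.zero_apply]
    · rw [hf x hx, zero_mul, Pi.zero_apply]
  rw [this, integral_zero']

section DyadicCubes

variable {n : ℕ}

theorem mem_dyadicCube_iff {k : ℤ} {m : Fin n → ℤ} {x : Fin n → ℝ} :
    x ∈ DyadicCube n k m ↔ ∀ i, ⌊x i / 2 ^ k⌋ = m i := by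
  have h : (0 : ℝ) < 2 ^ k := by positivity
  simp only [DyadicCube, Set.mem_ofPred_eq, Int.floor_eq_iff, le_div_iff₀ h, div_lt_iff₀ h]

theorem floor_div_two_zpow_of_le {k' k : ℤ} (h : k' ≤ k) (y : ℝ) :
    ⌊y / 2 ^ k⌋ = ⌊y / 2 ^ k'⌋ / 2 ^ (k - k').toNat := by
  have : (2 : ℝ) ^ k = 2 ^ k' * ((2 ^ (k - k').toNat : ℕ) : ℝ) := by
    rw [Nat.cast_pow, Nat.cast_ofNat, ← zpow_natCast, ← zpow_add₀ two_ne_zero,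
      Int.toNat_of_nonneg (by omega), add_sub_cancel]
  rw [this, ← div_div, Int.floor_div_natCast]
  push_cast
  rfl

theorem eq_of_mem_dyadicCube {k : ℤ} {m m' : Fin n → ℤ} {x : Fin n → ℝ}
    (hx : x ∈ DyadicCube n k m) (hx' : x ∈ DyadicCube n k m') : m = m' := by
  rw [mem_dyadicCube_iff] at hx hx'
  exact funext fun i => (hx i).symm.trans (hx' i)

theorem dyadicCube_subset_of_not_disjoint {k' k : ℤ} {m' m : Fin n → ℤ} (h : k' ≤ k)
    (hQ : ¬Disjoint (DyadicCube n k' m') (DyadicCube n k m)) :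
    DyadicCube n k' m' ⊆ DyadicCube n k m := by
  obtain ⟨z, hz', hz⟩ := Set.not_disjoint_iff.1 hQ
  intro y hy
  rw [mem_dyadicCube_iff] at hz' hz hy ⊢
  intro i
  rw [← hz i, floor_div_two_zpow_of_le h, floor_div_two_zpow_of_le h, hy i, hz' i]

theorem dyadicCube_nonempty (k : ℤ) (m : Fin n → ℤ) : (DyadicCube n k m).Nonempty :=
  ⟨fun i => m i * 2 ^ k, fun _ => ⟨le_rfl, mul_lt_mul_of_pos_right (lt_add_one _) (by positivity)⟩⟩

theorem dyadicCube_eq_pi (k : ℤ) (m : Fin n → ℤ) :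
    DyadicCube n k m = Set.univ.pi fun i => Set.Ico ((m i : ℝ) * 2 ^ k) ((m i + 1) * 2 ^ k) := by
  ext x
  simp [DyadicCube]

theorem measurableSet_dyadicCube (k : ℤ) (m : Fin n → ℤ) :
    MeasurableSet (DyadicCube n k m) := by
  rw [dyadicCube_eq_pi]
  exact MeasurableSet.univ_pi fun _ => measurableSet_Ico

theorem measure_dyadicCube_lt_top (ω : Measure (Fin n → ℝ)) [IsLocallyFiniteMeasure ω]
    (k : ℤ) (m : Fin n → ℤ) : ω (DyadicCube n k m) < ∞ := by
  rw [dyadicCube_eq_pi]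
  exact (measure_mono (Set.pi_mono fun _ _ => Set.Ico_subset_Icc_self)).trans_lt
    (isCompact_univ_pi fun _ => isCompact_Icc).measure_lt_top

def IsProperSubcube (J' J : ℤ × (Fin n → ℤ)) : Prop :=
  J'.1 < J.1 ∧ DyadicCube n J'.1 J'.2 ⊆ DyadicCube n J.1 J.2

theorem IsProperSubcube.asymm {J J' : ℤ × (Fin n → ℤ)} (h : IsProperSubcube J J') :
    ¬IsProperSubcube J' J :=
  fun h' => lt_asymm h.1 h'.1

theorem disjoint_of_not_isProperSubcube {J J' : ℤ × (Fin n → ℤ)} (hne : J ≠ J')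
    (h : ¬IsProperSubcube J J') (h' : ¬IsProperSubcube J' J) :
    Disjoint (DyadicCube n J.1 J.2) (DyadicCube n J'.1 J'.2) := by
  rcases lt_trichotomy J.1 J'.1 with hlt | heq | hgt
  · by_contra hQ
    exact h ⟨hlt, dyadicCube_subset_of_not_disjoint hlt.le hQ⟩
  · refine Set.disjoint_left.2 fun x hx hx' => hne (Prod.ext heq ?_)
    rw [heq] at hx
    exact eq_of_mem_dyadicCube hx hx'
  · by_contra hQ
    exact h' ⟨hgt, dyadicCube_subset_of_not_disjoint hgt.le fun hd => hQ hd.symm⟩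

open scoped Classical in
theorem sum_two_zpow_ancestors_le_one (S : Finset (ℤ × (Fin n → ℤ))) (J' : ℤ × (Fin n → ℤ)) :
    ∑ J ∈ S with IsProperSubcube J' J, (2 : ℝ) ^ (J'.1 - J.1) ≤ 1 := by
  obtain ⟨x, hx⟩ := dyadicCube_nonempty J'.1 J'.2
  refine sum_two_zpow_le_one (fun J₁ h₁ J₂ h₂ h => ?_) fun J hJ => ?_
  · have h₁ := (Finset.mem_filter.1 h₁).2.2 hx
    have h₂ := (Finset.mem_filter.1 h₂).2.2 hx
    have hk : J₁.1 = J₂.1 := by omega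
    rw [hk] at h₁
    exact Prod.ext hk (eq_of_mem_dyadicCube h₁ h₂)
  · have := (Finset.mem_filter.1 hJ).2.1
    omega

theorem sum_measure_dyadicCube_le (ω : Measure (Fin n → ℝ)) {F : Finset (ℤ × (Fin n → ℤ))}
    {k : ℤ} {E : Set (Fin n → ℝ)} (hE : ω E ≠ ∞)
    (hF : ∀ J ∈ F, J.1 = k ∧ DyadicCube n J.1 J.2 ⊆ E) :
    ∑ J ∈ F, (ω (DyadicCube n J.1 J.2)).toReal ≤ (ω E).toReal := by
  have hdisj : (F : Set (ℤ × (Fin n → ℤ))).PairwiseDisjoint fun J => DyadicCube n J.1 J.2 := by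
    intro J₁ h₁ J₂ h₂ hne
    have hk : J₁.1 = J₂.1 := (hF J₁ h₁).1.trans (hF J₂ h₂).1.symm
    refine Set.disjoint_left.2 fun x hx₁ hx₂ => hne (Prod.ext hk ?_)
    exact eq_of_mem_dyadicCube (hk ▸ hx₁ : x ∈ DyadicCube n J₂.1 J₁.2) hx₂
  simp_rw [← measureReal_def]
  rw [← measureReal_biUnion_finset hdisj (fun J _ => measurableSet_dyadicCube _ _)
    fun J hJ => ne_top_of_le_ne_top hE (measure_mono (hF J hJ).2)]
  exact measureReal_mono (Set.iUnion₂_subset fun J hJ => (hF J hJ).2) hE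

open scoped Classical in
theorem sum_two_zpow_mul_measure_subcubes_le_one (ω : Measure (Fin n → ℝ))
    [IsLocallyFiniteMeasure ω] (S : Finset (ℤ × (Fin n → ℤ))) (J : ℤ × (Fin n → ℤ)) :
    ∑ J' ∈ S with IsProperSubcube J' J, (2 : ℝ) ^ (J'.1 - J.1) *
      ((ω (DyadicCube n J'.1 J'.2)).toReal / (ω (DyadicCube n J.1 J.2)).toReal) ≤ 1 := by
  set F := S.filter fun J' => IsProperSubcube J' J
  rw [← Finset.sum_fiberwise_of_maps_to fun J' hJ' => Finset.mem_image_of_mem Prod.fst hJ']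
  calc _ ≤ ∑ k ∈ F.image Prod.fst, (2 : ℝ) ^ (k - J.1) := by
        refine Finset.sum_le_sum fun k _ => ?_
        have hsum := sum_measure_dyadicCube_le ω (F := F.filter fun J' => J'.1 = k)
          (measure_dyadicCube_lt_top ω J.1 J.2).ne fun J' hJ' =>
            ⟨(Finset.mem_filter.1 hJ').2, (Finset.mem_filter.1 (Finset.mem_filter.1 hJ').1).2.2⟩
        calc _ = (2 : ℝ) ^ (k - J.1) * ((∑ J' ∈ F with J'.1 = k,
              (ω (DyadicCube n J'.1 J'.2)).toReal) / (ω (DyadicCube n J.1 J.2)).toReal) := by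
              rw [Finset.sum_div, Finset.mul_sum]
              exact Finset.sum_congr rfl fun J' hJ' => by rw [(Finset.mem_filter.1 hJ').2]
          _ ≤ (2 : ℝ) ^ (k - J.1) * 1 := by
              gcongr
              exact div_le_one_of_le₀ hsum ENNReal.toReal_nonneg
          _ = _ := mul_one _
    _ ≤ 1 := by
        refine sum_two_zpow_le_one (fun k₁ _ k₂ _ h => by omega) fun k hk => ?_
        obtain ⟨J', hJ', rfl⟩ := Finset.mem_image.1 hk
        have := (Finset.mem_filter.1 hJ').2.1
        omega

end DyadicCubes

/-- Almost orthogonality: if each `g_J` is supported in the dyadic cube `J`, has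
vanishing `ω`-mean, and nested pairs satisfy
`|∫ g_J g_{J'} dω| ≤ 2^{-m} √(|J'|_ω/|J|_ω) ‖g_{J'}‖ ‖g_J‖` when `ℓ(J') = 2^{-m} ℓ(J)`,
then `‖Σ g_J‖² ≤ C Σ ‖g_J‖²`. -/
theorem almost_orthogonality (n : ℕ) :
    ∃ C : ℝ, 0 < C ∧
      ∀ (ω : Measure (Fin n → ℝ)), IsLocallyFiniteMeasure ω →
      ∀ (S : Finset (ℤ × (Fin n → ℤ))) (g : ℤ × (Fin n → ℤ) → (Fin n → ℝ) → ℝ),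
        (∀ J ∈ S, Measurable (g J)) →
        (∀ J ∈ S, MemLp (g J) 2 ω) →
        (∀ J ∈ S, ∀ x, x ∉ DyadicCube n J.1 J.2 → g J x = 0) →
        (∀ J ∈ S, ∫ x, g J x ∂ω = 0) →
        (∀ J ∈ S, ∀ J' ∈ S, J'.1 < J.1 →
          DyadicCube n J'.1 J'.2 ⊆ DyadicCube n J.1 J.2 →
          |∫ x, g J x * g J' x ∂ω| ≤
            (2 : ℝ) ^ (J'.1 - J.1) *
              Real.sqrt ((ω (DyadicCube n J'.1 J'.2)).toReal /
                (ω (DyadicCube n J.1 J.2)).toReal) *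
              Real.sqrt (∫ x, (g J' x) ^ 2 ∂ω) * Real.sqrt (∫ x, (g J x) ^ 2 ∂ω)) →
        ∫ x, (∑ J ∈ S, g J x) ^ 2 ∂ω ≤ C * ∑ J ∈ S, ∫ x, (g J x) ^ 2 ∂ω := by
  classical
  refine ⟨3, by norm_num, fun ω _ S g _ hL2 hsupp _ hpair => ?_⟩
  set A : ℤ × (Fin n → ℤ) → ℝ := fun J => ∫ x, (g J x) ^ 2 ∂ω
  have hA : ∀ J, 0 ≤ A J := fun J => integral_nonneg fun x => sq_nonneg _
  have hdiag : ∑ J ∈ S, ∫ x, g J x * g J x ∂ω = ∑ J ∈ S, A J := by simp only [A, sq]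
  have hoff : 2 * ∑ J ∈ S, ∑ J' ∈ S with IsProperSubcube J' J, ∫ x, g J x * g J' x ∂ω ≤
      2 * ∑ J ∈ S, A J := by
    calc _ = ∑ J ∈ S, ∑ J' ∈ S with IsProperSubcube J' J, 2 * ∫ x, g J x * g J' x ∂ω := by
          simp_rw [Finset.mul_sum]
      _ ≤ ∑ J ∈ S, ∑ J' ∈ S with IsProperSubcube J' J,
          ((2 : ℝ) ^ (J'.1 - J.1) * ((ω (DyadicCube n J'.1 J'.2)).toReal /
            (ω (DyadicCube n J.1 J.2)).toReal) * A J + (2 : ℝ) ^ (J'.1 - J.1) * A J') := by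
          refine Finset.sum_le_sum fun J hJ => Finset.sum_le_sum fun J' hJ' => ?_
          obtain ⟨hJ'S, hsub⟩ := Finset.mem_filter.1 hJ'
          exact two_mul_le_of_abs_le_mul_sqrt (by positivity) (by positivity) (hA J) (hA J')
            (hpair J hJ J' hJ'S hsub.1 hsub.2)
      _ ≤ 2 * ∑ J ∈ S, A J :=
          Finset.sum_sum_filter_mul_add_mul_le S IsProperSubcube _ _ A (fun J _ => hA J)
            (fun J _ => sum_two_zpow_mul_measure_subcubes_le_one ω S J)
            (fun J' _ => sum_two_zpow_ancestors_le_one S J')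
  rw [integral_sq_sum_eq_sum_sum_integral_mul S hL2,
    Finset.sum_sum_eq_sum_diag_add_two_mul_sum_rel S _ IsProperSubcube
      (fun _ _ => by simp_rw [mul_comm]) (fun _ _ h => h.asymm)
      fun J hJ J' hJ' hne h h' => integral_mul_eq_zero_of_disjoint
        (disjoint_of_not_isProperSubcube hne h h') (hsupp J hJ) (hsupp J' hJ')]
  linarith
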